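/- (Lemma 3.2, global negativity of Υ.) For every integer p ≥ 2 there exists ζ_p ∈ (0, √(2 log 2)] such that for all β, γ > 0 with γ < min(β², ζ_p·β) and all λ ∈ (0, 1 − γ/β²) sufficiently small, there exist positive constants δ, δ' and c (depending on p, β, γ, λ) such that Υ_{p,β,γ}(u) ≤ −δ for all u ∈ [0,1] \ (1/2 − δ', 1/2 + δ'), and Υ_{p,β,γ}(u) ≤ −c (u − 1/2)² for all u ∈ (1/2 − δ', 1/2 + δ'). Moreover, ζ_p may be chosen nondecreasing in p with ζ_2 = 2^{−1/2} and lim_{p→∞} ζ_p = √(2 log 2). -/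

import Mathlib

open Real Filter

/-- `I(u) = u log u + (1-u) log(1-u) + log 2` (entropy functional; note `Real.log 0 = 0`). -/
noncomputable def Ifun (u : ℝ) : ℝ :=
  u * Real.log u + (1 - u) * Real.log (1 - u) + Real.log 2

/-- The function `Υ_{p,β,γ}` (with cut-off parameter `lam`). -/
noncomputable def Ups (p : ℕ) (β γ lam : ℝ) (u : ℝ) : ℝ :=
  if γ / β ^ 2 + lam - 1 ≤ (1 - 2 * u) ^ p then
    γ ^ 2 / β ^ 2 - Ifun u - γ ^ 2 / (β ^ 2 * (1 + (1 - 2 * u) ^ p))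
  else
    γ ^ 2 / β ^ 2 - Ifun u + β ^ 2 * (1 + (1 - 2 * u) ^ p) - 2 * γ

/-!
Write `x = 1 - 2u` and `r = γ² / β²`; then `r < γ` because `γ < β²`. On the second branch
`Υ ≤ r + λβ² - γ`, which is negative once `λβ² < (γ - r) / 2`. On the first branch
`Υ = r xᵖ / (1 + xᵖ) - I(u)`. Near `u = 1/2`, Pinsker's bound `I(u) ≥ x² / 2` beats `r |x|ᵖ`
(for `p = 2` because `r < ζ₂² = 1/2`). Away from `1/2` it suffices that `ζ_p²` is admissible,
i.e. `ζ_p² tᵖ ≤ I((1 - t) / 2) (1 + tᵖ)` on `[0, 1]`. Admissible constants are `1/2` for `p = 2`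
(Pinsker) and an explicit constant for each `k ≥ 3` tending to `2 log 2`; admissibility passes to
larger exponents, so the running maxima of these constants can serve as `ζ_p²`.
-/

open Set Topology

lemma Ifun_eq_log_two_sub_binEntropy (u : ℝ) : Ifun u = log 2 - binEntropy u := by
  simp only [Ifun, binEntropy, log_inv]
  ring

lemma Ifun_nonneg (u : ℝ) : 0 ≤ Ifun u := by
  rw [Ifun_eq_log_two_sub_binEntropy]
  linarith [binEntropy_le_log_two (p := u)]

lemma Ifun_one_sub (u : ℝ) : Ifun (1 - u) = Ifun u := by
  simp only [Ifun_eq_log_two_sub_binEntropy, binEntropy_one_sub]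

lemma Ifun_zero : Ifun 0 = log 2 := by
  simp [Ifun]

lemma continuous_Ifun : Continuous Ifun := by
  simp only [funext Ifun_eq_log_two_sub_binEntropy]
  fun_prop

lemma Ifun_antitoneOn : AntitoneOn Ifun (Icc 0 2⁻¹) := fun a ha b hb hab => by
  simp only [Ifun_eq_log_two_sub_binEntropy]
  linarith [binEntropy_strictMonoOn.monotoneOn ha hb hab]

lemma concaveOn_binEntropy_add_two_mul_sq :
    ConcaveOn ℝ (Icc 0 1) fun u => binEntropy u + 2 * (u - 1 / 2) ^ 2 := by
  refine concaveOn_of_hasDerivWithinAt2_nonpos (convex_Icc 0 1) (by fun_prop)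
    (f' := fun u => log (1 - u) - log u + 4 * (u - 1 / 2))
    (f'' := fun u => -(1 - u)⁻¹ - u⁻¹ + 4) ?_ ?_ ?_ <;>
    simp only [interior_Icc, mem_Ioo] <;> rintro x ⟨hx0, hx1⟩
  · have hsq : HasDerivAt (fun u : ℝ => 2 * (u - 1 / 2) ^ 2) (4 * (x - 1 / 2)) x :=
      ((((hasDerivAt_id' x).sub_const (1 / 2)).fun_pow 2).const_mul 2).congr_deriv
        (by push_cast; ring)
    exact ((hasDerivAt_binEntropy hx0.ne' (by linarith)).add hsq).hasDerivWithinAt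
  · have h1x : 0 < 1 - x := by linarith
    have hlog : HasDerivAt (fun u => log (1 - u)) (-(1 - x)⁻¹) x :=
      (((hasDerivAt_id' x).const_sub 1).log h1x.ne').congr_deriv (by field_simp)
    have hlin : HasDerivAt (fun u : ℝ => 4 * (u - 1 / 2)) 4 x :=
      (((hasDerivAt_id' x).sub_const (1 / 2)).const_mul 4).congr_deriv (mul_one 4)
    exact ((hlog.sub (hasDerivAt_log hx0.ne')).add hlin).hasDerivWithinAt
  · have h1x : 0 < 1 - x := by linarith
    rw [show -(1 - x)⁻¹ - x⁻¹ + 4 = -(2 * x - 1) ^ 2 / (x * (1 - x)) by field_simp; ring]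
    exact div_nonpos_of_nonpos_of_nonneg (by nlinarith [sq_nonneg (2 * x - 1)]) (by positivity)

lemma two_mul_sq_le_Ifun {u : ℝ} (h0 : 0 ≤ u) (h1 : u ≤ 1) : 2 * (u - 1 / 2) ^ 2 ≤ Ifun u := by
  -- the concave function `binEntropy u + 2 (u - 1/2)²` is symmetric about `1/2`, so it peaks there
  have h := concaveOn_binEntropy_add_two_mul_sq.2 ⟨h0, h1⟩
    (⟨by linarith, by linarith⟩ : 1 - u ∈ Icc (0 : ℝ) 1)
    (by norm_num : (0 : ℝ) ≤ 1 / 2) (by norm_num : (0 : ℝ) ≤ 1 / 2) (by norm_num)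
  have hmid : 1 / 2 * u + 1 / 2 * (1 - u) = 2⁻¹ := by ring
  simp only [smul_eq_mul, hmid, binEntropy_one_sub, binEntropy_two_inv] at h
  rw [Ifun_eq_log_two_sub_binEntropy]
  nlinarith

/-- `c` is admissible for the exponent `p` when `c w / (1 + w) ≤ I(u)` for `w = |1 - 2u| ^ p`,
that is, when the first branch of `Υ` with `γ² / β² = c` is nonpositive. -/
def IsAdmissible (p : ℕ) (c : ℝ) : Prop :=
  ∀ t ∈ Icc (0 : ℝ) 1, c * t ^ p ≤ Ifun ((1 - t) / 2) * (1 + t ^ p)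

namespace IsAdmissible

variable {p q : ℕ} {a b c : ℝ}

lemma mono (h : IsAdmissible p c) (hpq : p ≤ q) : IsAdmissible q c := by
  intro t ht
  obtain ⟨k, rfl⟩ := Nat.exists_eq_add_of_le hpq
  have htk : t ^ k ≤ 1 := pow_le_one₀ ht.1 ht.2
  have hI := Ifun_nonneg ((1 - t) / 2)
  calc c * t ^ (p + k) = c * t ^ p * t ^ k := by ring
    _ ≤ Ifun ((1 - t) / 2) * (1 + t ^ p) * t ^ k :=
        mul_le_mul_of_nonneg_right (h t ht) (pow_nonneg ht.1 k)
    _ = Ifun ((1 - t) / 2) * (t ^ k + t ^ (p + k)) := by ring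
    _ ≤ Ifun ((1 - t) / 2) * (1 + t ^ (p + k)) := by gcongr

lemma max (ha : IsAdmissible p a) (hb : IsAdmissible p b) : IsAdmissible p (max a b) :=
  fun t ht => by
    rw [max_mul_of_nonneg _ _ (pow_nonneg ht.1 p)]
    exact max_le (ha t ht) (hb t ht)

lemma le_two_mul_log_two (h : IsAdmissible p c) : c ≤ 2 * log 2 := by
  have := h 1 ⟨zero_le_one, le_rfl⟩
  norm_num [Ifun_zero] at this
  linarith

end IsAdmissible

lemma isAdmissible_two_half : IsAdmissible 2 (1 / 2) := fun t ⟨ht0, ht1⟩ => by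
  have := two_mul_sq_le_Ifun (u := (1 - t) / 2) (by linarith) (by linarith)
  nlinarith [Ifun_nonneg ((1 - t) / 2)]

-- Split `t` at `a = 1 - 2 / k`: for `t ≥ a` the entropy is at least `I(1 / k)`, while for
-- `t < a` Pinsker's bound `t² / 2` beats `tᵏ ≤ (t / a)² aᵏ`.
noncomputable def candidate (k : ℕ) : ℝ :=
  min (Ifun (1 / k)) ((1 - 2 / k) ^ 2 / (4 * (1 - 2 / k) ^ k))

lemma isAdmissible_two_mul_candidate {k : ℕ} (hk : 3 ≤ k) : IsAdmissible k (2 * candidate k) := by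
  intro t ⟨ht0, ht1⟩
  have hk' : (3 : ℝ) ≤ k := by exact_mod_cast hk
  set a : ℝ := 1 - 2 / k with ha
  have ha0 : 0 < a := by rw [ha, sub_pos, div_lt_one (by linarith)]; linarith
  have hI0 := Ifun_nonneg ((1 - t) / 2)
  have htk : 0 ≤ t ^ k := pow_nonneg ht0 k
  rcases le_or_gt a t with hat | hta
  · have hI : candidate k ≤ Ifun ((1 - t) / 2) := by
      have hak : (1 - a) / 2 = 1 / k := by rw [ha]; ring
      refine (min_le_left _ _).trans (hak ▸ Ifun_antitoneOn ⟨by linarith, by linarith⟩ ?_ ?_)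
      · rw [hak]
        exact ⟨by positivity, by rw [one_div]; exact inv_anti₀ (by norm_num) (by linarith)⟩
      · linarith
    nlinarith [pow_le_one₀ ht0 ht1 (n := k)]
  · have hpow : t ^ k * a ^ 2 ≤ a ^ k * t ^ 2 := by
      obtain ⟨m, rfl⟩ := Nat.exists_eq_add_of_le (show 2 ≤ k by omega)
      have := pow_le_pow_left₀ ht0 hta.le m
      rw [pow_add, pow_add]
      nlinarith [mul_nonneg (sq_nonneg t) (sq_nonneg a)]
    have hc : 2 * candidate k * t ^ k ≤ t ^ 2 / 2 := by
      have hak : 0 < a ^ k := pow_pos ha0 k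
      calc 2 * candidate k * t ^ k ≤ 2 * (a ^ 2 / (4 * a ^ k)) * t ^ k := by
            gcongr; exact min_le_right _ _
        _ = t ^ k * a ^ 2 / (2 * a ^ k) := by field_simp; ring
        _ ≤ t ^ 2 / 2 := by rw [div_le_div_iff₀ (by positivity) two_pos]; nlinarith
    have := two_mul_sq_le_Ifun (u := (1 - t) / 2) (by linarith) (by linarith)
    nlinarith

-- `admissibleSeq n` serves the exponent `n + 2`.
noncomputable def admissibleSeq : ℕ → ℝ
  | 0 => 1 / 2
  | n + 1 => max (admissibleSeq n) (2 * candidate (n + 3))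

lemma isAdmissible_admissibleSeq (n : ℕ) : IsAdmissible (n + 2) (admissibleSeq n) := by
  induction n with
  | zero => exact isAdmissible_two_half
  | succ n ih => exact (ih.mono (by omega)).max (isAdmissible_two_mul_candidate (by omega))

lemma monotone_admissibleSeq : Monotone admissibleSeq :=
  monotone_nat_of_le_succ fun _ => le_max_left _ _

lemma tendsto_candidate : Tendsto candidate atTop (𝓝 (log 2)) := by
  have hI : Tendsto (fun k : ℕ => Ifun (1 / k)) atTop (𝓝 (log 2)) :=
    Ifun_zero ▸ (continuous_Ifun.tendsto 0).comp tendsto_one_div_atTop_nhds_zero_nat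
  have hbase : Tendsto (fun k : ℕ => 1 - 2 / (k : ℝ)) atTop (𝓝 1) := by
    simpa using tendsto_const_nhds.sub (tendsto_const_div_atTop_nhds_zero_nat (2 : ℝ))
  have hpow : Tendsto (fun k : ℕ => (1 - 2 / (k : ℝ)) ^ k) atTop (𝓝 (exp (-2))) :=
    (tendsto_one_add_div_pow_exp (-2)).congr fun k => by rw [neg_div, ← sub_eq_add_neg]
  have hquot := (hbase.pow 2).div (hpow.const_mul 4) (by positivity)
  have hlt : log 2 < 1 ^ 2 / (4 * exp (-2)) := by
    have h3 : exp (-2) * 3 ≤ 1 := by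
      rw [exp_neg, inv_mul_le_iff₀ (exp_pos 2)]
      linarith [add_one_le_exp (2 : ℝ)]
    rw [lt_div_iff₀ (by positivity)]
    nlinarith [log_two_lt_d9, exp_pos (-2)]
  have := hI.min hquot
  rwa [min_eq_left hlt.le] at this

lemma tendsto_admissibleSeq : Tendsto admissibleSeq atTop (𝓝 (2 * log 2)) := by
  refine tendsto_of_tendsto_of_tendsto_of_le_of_le'
    ((tendsto_candidate.const_mul 2).comp (tendsto_add_atTop_nat 2)) tendsto_const_nhds ?_
    (.of_forall fun n => (isAdmissible_admissibleSeq n).le_two_mul_log_two)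
  filter_upwards [eventually_ge_atTop 1] with n hn
  obtain ⟨m, rfl⟩ := Nat.exists_eq_add_of_le' hn
  exact le_max_right _ _

lemma div_one_add_le_abs {w : ℝ} (hw : 0 < 1 + w) : w / (1 + w) ≤ |w| := by
  rcases le_or_gt w 0 with h | h
  · exact (div_nonpos_of_nonpos_of_nonneg h hw.le).trans (abs_nonneg w)
  · rw [abs_of_pos h]
    exact div_le_self h.le (by linarith)

lemma Ifun_one_sub_abs (u : ℝ) : Ifun ((1 - |1 - 2 * u|) / 2) = Ifun u := by
  rcases abs_cases (1 - 2 * u) with ⟨h, -⟩ | ⟨h, -⟩ <;> rw [h]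
  · congr 1; ring
  · rw [← Ifun_one_sub]; congr 1; ring

lemma abs_one_sub_two_mul_le_one {u : ℝ} (hu : u ∈ Icc (0 : ℝ) 1) : |1 - 2 * u| ≤ 1 :=
  abs_le.2 ⟨by linarith [hu.2], by linarith [hu.1]⟩

section FirstBranch

variable {p : ℕ} {M r η t u : ℝ}

lemma first_branch_le_of_isAdmissible (hM : IsAdmissible p M) (hr : 0 ≤ r) (hrM : r ≤ M)
    (hη : 0 ≤ η) (hηu : η ≤ |1 - 2 * u|) (hu : u ∈ Icc (0 : ℝ) 1)
    (hw : 0 < 1 + (1 - 2 * u) ^ p) :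
    r * ((1 - 2 * u) ^ p / (1 + (1 - 2 * u) ^ p)) - Ifun u
      ≤ -min (η ^ 2 / 2) ((M - r) * η ^ p / 2) := by
  have hx1 := abs_one_sub_two_mul_le_one hu
  set w := (1 - 2 * u) ^ p
  rcases le_or_gt w 0 with hw0 | hw0
  · have hpinsker := two_mul_sq_le_Ifun hu.1 hu.2
    have hη2 : η ^ 2 ≤ (1 - 2 * u) ^ 2 := sq_abs (1 - 2 * u) ▸ pow_le_pow_left₀ hη hηu 2
    have := mul_nonpos_of_nonneg_of_nonpos hr (div_nonpos_of_nonpos_of_nonneg hw0 hw.le)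
    nlinarith [min_le_left (η ^ 2 / 2) ((M - r) * η ^ p / 2)]
  · have hwabs : w = |1 - 2 * u| ^ p := by rw [← abs_pow, abs_of_pos hw0]
    have hadm := hM _ ⟨abs_nonneg _, hx1⟩
    rw [← hwabs, Ifun_one_sub_abs] at hadm
    have hηw : η ^ p ≤ w := hwabs ▸ pow_le_pow_left₀ hη hηu p
    have hw1 : w ≤ 1 := hwabs ▸ pow_le_one₀ (abs_nonneg _) hx1
    have hI : M * (w / (1 + w)) ≤ Ifun u := by
      rw [mul_div_assoc', div_le_iff₀ hw]; exact hadm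
    have hfrac : η ^ p / 2 ≤ w / (1 + w) := by
      rw [div_le_div_iff₀ two_pos hw]; nlinarith
    nlinarith [min_le_right (η ^ 2 / 2) ((M - r) * η ^ p / 2)]

lemma first_branch_le_neg_mul_sq (hp : 2 ≤ p) (hr : 0 ≤ r) (ht : |1 - 2 * u| ≤ t) (ht1 : t ≤ 1)
    (hw : 0 < 1 + (1 - 2 * u) ^ p) :
    r * ((1 - 2 * u) ^ p / (1 + (1 - 2 * u) ^ p)) - Ifun u
      ≤ -(2 - 4 * r * t ^ (p - 2)) * (u - 1 / 2) ^ 2 := by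
  have hpinsker := two_mul_sq_le_Ifun (u := u) (by linarith [(abs_le.1 (ht.trans ht1)).2])
    (by linarith [(abs_le.1 (ht.trans ht1)).1])
  have hpow : |1 - 2 * u| ^ p ≤ t ^ (p - 2) * (4 * (u - 1 / 2) ^ 2) := by
    obtain ⟨k, rfl⟩ := Nat.exists_eq_add_of_le' hp
    rw [pow_add, Nat.add_sub_cancel, sq_abs, show (1 - 2 * u) ^ 2 = 4 * (u - 1 / 2) ^ 2 by ring]
    gcongr
  calc r * ((1 - 2 * u) ^ p / (1 + (1 - 2 * u) ^ p)) - Ifun u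
      ≤ r * |1 - 2 * u| ^ p - 2 * (u - 1 / 2) ^ 2 := by
        rw [← abs_pow]; gcongr; exact div_one_add_le_abs hw
    _ ≤ r * (t ^ (p - 2) * (4 * (u - 1 / 2) ^ 2)) - 2 * (u - 1 / 2) ^ 2 := by gcongr
    _ = -(2 - 4 * r * t ^ (p - 2)) * (u - 1 / 2) ^ 2 := by ring

end FirstBranch

section Ups

variable {p : ℕ} {M β γ lam η t u : ℝ}

lemma Ups_eq_of_le (hβ : β ≠ 0) (hw : 0 < 1 + (1 - 2 * u) ^ p)
    (h : γ / β ^ 2 + lam - 1 ≤ (1 - 2 * u) ^ p) :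
    Ups p β γ lam u = γ ^ 2 / β ^ 2 * ((1 - 2 * u) ^ p / (1 + (1 - 2 * u) ^ p)) - Ifun u := by
  rw [Ups, if_pos h]
  field_simp
  ring

lemma Ups_le_of_lt (hβ : 0 < β) (h : (1 - 2 * u) ^ p < γ / β ^ 2 + lam - 1) :
    Ups p β γ lam u ≤ γ ^ 2 / β ^ 2 + lam * β ^ 2 - γ := by
  have hb : β ^ 2 * (1 + (1 - 2 * u) ^ p) ≤ γ + lam * β ^ 2 := by
    calc β ^ 2 * (1 + (1 - 2 * u) ^ p) ≤ β ^ 2 * (γ / β ^ 2 + lam) :=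
          mul_le_mul_of_nonneg_left (by linarith) (sq_nonneg β)
      _ = γ + lam * β ^ 2 := by field_simp
  rw [Ups, if_neg h.not_ge]
  linarith [Ifun_nonneg u]

lemma Ups_le_of_le_abs (hM : IsAdmissible p M) (hβ : 0 < β) (hγ : 0 < γ)
    (hrM : γ ^ 2 / β ^ 2 ≤ M) (hlam : 0 < lam) (hη : 0 ≤ η) (hu : u ∈ Icc (0 : ℝ) 1)
    (hηu : η ≤ |1 - 2 * u|) :
    Ups p β γ lam u
      ≤ max (-min (η ^ 2 / 2) ((M - γ ^ 2 / β ^ 2) * η ^ p / 2))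
        (γ ^ 2 / β ^ 2 + lam * β ^ 2 - γ) := by
  by_cases h : γ / β ^ 2 + lam - 1 ≤ (1 - 2 * u) ^ p
  · have hw : 0 < 1 + (1 - 2 * u) ^ p := by
      have : 0 < γ / β ^ 2 := by positivity
      linarith
    rw [Ups_eq_of_le hβ.ne' hw h]
    exact le_max_of_le_left
      (first_branch_le_of_isAdmissible hM (by positivity) hrM hη hηu hu hw)
  · exact le_max_of_le_right (Ups_le_of_lt hβ (not_le.1 h))

lemma Ups_le_of_abs_lt (hp : 2 ≤ p) (hβ : β ≠ 0) (ht1 : t ≤ 1) (hts : t ≤ 1 - γ / β ^ 2 - lam)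
    (hu : |1 - 2 * u| < t) :
    Ups p β γ lam u ≤ -(2 - 4 * (γ ^ 2 / β ^ 2) * t ^ (p - 2)) * (u - 1 / 2) ^ 2 := by
  have hwx : |(1 - 2 * u) ^ p| ≤ |1 - 2 * u| := by
    rw [abs_pow]
    exact pow_le_of_le_one (abs_nonneg _) (hu.le.trans ht1) (by omega)
  have hw := (abs_lt.1 (hwx.trans_lt hu)).1
  have hw1 : 0 < 1 + (1 - 2 * u) ^ p := by linarith
  rw [Ups_eq_of_le hβ hw1 (by linarith)]
  exact first_branch_le_neg_mul_sq hp (by positivity) hu.le ht1 hw1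

end Ups

lemma exists_mul_pow_lt_half {p : ℕ} {r s : ℝ} (hr : 0 ≤ r) (hs : 0 < s) (hp : 2 < p ∨ r < 1 / 2) :
    ∃ t, 0 < t ∧ t ≤ s ∧ t ≤ 1 ∧ r * t ^ (p - 2) < 1 / 2 := by
  set t := min (min s 1) (1 / (2 * r + 1))
  have ht0 : 0 < t := lt_min (lt_min hs one_pos) (by positivity)
  have ht1 : t ≤ 1 := (min_le_left _ _).trans (min_le_right _ _)
  refine ⟨t, ht0, (min_le_left _ _).trans (min_le_left _ _), ht1, ?_⟩
  rcases hp with hp | hr2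
  · have htr : r * t ≤ r * (1 / (2 * r + 1)) := mul_le_mul_of_nonneg_left (min_le_right _ _) hr
    have : r * (1 / (2 * r + 1)) < 1 / 2 := by
      rw [mul_one_div, div_lt_iff₀ (by positivity)]; linarith
    have := mul_le_mul_of_nonneg_left (pow_le_of_le_one ht0.le ht1 (by omega : p - 2 ≠ 0)) hr
    linarith
  · nlinarith [pow_le_one₀ ht0.le ht1 (n := p - 2)]

theorem exists_Ups_bounds_of_isAdmissible {p : ℕ} {M β γ : ℝ} (hM : IsAdmissible p M)
    (hp : 2 ≤ p) (hβ : 0 < β) (hγ : 0 < γ) (hγβ : γ < β ^ 2) (hrM : γ ^ 2 / β ^ 2 < M)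
    (hquad : 2 < p ∨ γ ^ 2 / β ^ 2 < 1 / 2) :
    ∃ lam₀ : ℝ, 0 < lam₀ ∧
      ∀ lam : ℝ, 0 < lam → lam < lam₀ → lam < 1 - γ / β ^ 2 →
        ∃ δ : ℝ, 0 < δ ∧ ∃ δ' : ℝ, 0 < δ' ∧ ∃ c : ℝ, 0 < c ∧
          (∀ u ∈ Icc (0 : ℝ) 1, u ∉ Ioo (1 / 2 - δ') (1 / 2 + δ') → Ups p β γ lam u ≤ -δ) ∧
          (∀ u ∈ Ioo (1 / 2 - δ') (1 / 2 + δ'), Ups p β γ lam u ≤ -c * (u - 1 / 2) ^ 2) := by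
  set r := γ ^ 2 / β ^ 2
  have hr : 0 ≤ r := by positivity
  have hrγ : r < γ := by
    rw [div_lt_iff₀ (by positivity)]
    nlinarith
  refine ⟨(γ - r) / (2 * β ^ 2), by apply div_pos <;> [linarith; positivity], ?_⟩
  intro lam hlam hlam₀ hlams
  have hlamβ : lam * β ^ 2 < (γ - r) / 2 := by
    rw [lt_div_iff₀ (by positivity)] at hlam₀
    linarith
  obtain ⟨η, hη, hηs, hη1, hηr⟩ := exists_mul_pow_lt_half (p := p) hr (sub_pos.2 hlams) hquad
  refine ⟨min (min (η ^ 2 / 2) ((M - r) * η ^ p / 2)) ((γ - r) / 2), ?_, η / 2, by positivity,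
    2 - 4 * r * η ^ (p - 2), by linarith, ?_, ?_⟩
  · have := pow_pos hη p
    exact lt_min (lt_min (by positivity) (by nlinarith)) (by linarith)
  · intro u hu hfar
    have hηu : η ≤ |1 - 2 * u| := by
      rw [mem_Ioo, not_and_or, not_lt, not_lt] at hfar
      rcases hfar with h | h
      · rw [abs_of_nonneg (by linarith)]; linarith
      · rw [abs_of_nonpos (by linarith)]; linarith
    refine (Ups_le_of_le_abs hM hβ hγ hrM.le hlam hη.le hu hηu).trans (max_le ?_ ?_)
    · exact neg_le_neg (min_le_left _ _)
    · linarith [min_le_right (min (η ^ 2 / 2) ((M - r) * η ^ p / 2)) ((γ - r) / 2)]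
  · rintro u ⟨hu0, hu1⟩
    exact Ups_le_of_abs_lt hp hβ.ne' hη1 (by linarith) (abs_lt.2 ⟨by linarith, by linarith⟩)

/-- Lemma 3.2, global negativity of `Υ`. -/
theorem stmt8 :
    ∃ ζ : ℕ → ℝ, Monotone ζ ∧ ζ 2 = (2 : ℝ) ^ (-(1 : ℝ) / 2) ∧
      Tendsto ζ atTop (nhds (Real.sqrt (2 * Real.log 2))) ∧
      (∀ p : ℕ, 2 ≤ p → 0 < ζ p ∧ ζ p ≤ Real.sqrt (2 * Real.log 2)) ∧
      ∀ p : ℕ, 2 ≤ p → ∀ β γ : ℝ, 0 < β → 0 < γ → γ < min (β ^ 2) (ζ p * β) →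
        ∃ lam₀ : ℝ, 0 < lam₀ ∧
          ∀ lam : ℝ, 0 < lam → lam < lam₀ → lam < 1 - γ / β ^ 2 →
            ∃ δ : ℝ, 0 < δ ∧ ∃ δ' : ℝ, 0 < δ' ∧ ∃ c : ℝ, 0 < c ∧
              (∀ u ∈ Set.Icc (0 : ℝ) 1, u ∉ Set.Ioo (1 / 2 - δ') (1 / 2 + δ') →
                Ups p β γ lam u ≤ -δ) ∧
              (∀ u ∈ Set.Ioo (1 / 2 - δ') (1 / 2 + δ'),
                Ups p β γ lam u ≤ -c * (u - 1 / 2) ^ 2) := by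
  have hadm (p : ℕ) (hp : 2 ≤ p) : IsAdmissible p (admissibleSeq (p - 2)) :=
    Nat.sub_add_cancel hp ▸ isAdmissible_admissibleSeq (p - 2)
  have hhalf (n : ℕ) : 1 / 2 ≤ admissibleSeq n := monotone_admissibleSeq n.zero_le
  refine ⟨fun p => √(admissibleSeq (p - 2)),
    fun p q hpq => sqrt_le_sqrt (monotone_admissibleSeq (Nat.sub_le_sub_right hpq 2)), ?_,
    (continuous_sqrt.tendsto _).comp (tendsto_admissibleSeq.comp (tendsto_sub_atTop_nat 2)),
    fun p hp => ⟨sqrt_pos.2 (by linarith [hhalf (p - 2)]),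
      sqrt_le_sqrt (hadm p hp).le_two_mul_log_two⟩, ?_⟩
  · rw [neg_div, rpow_neg zero_le_two, ← sqrt_eq_rpow, ← sqrt_inv]
    norm_num [admissibleSeq]
  intro p hp β γ hβ hγ hγ'
  obtain ⟨hγβ, hγζ⟩ := lt_min_iff.1 hγ'
  have hrM : γ ^ 2 / β ^ 2 < admissibleSeq (p - 2) := by
    rw [div_lt_iff₀ (by positivity), ← sq_sqrt (by linarith [hhalf (p - 2)] :
      0 ≤ admissibleSeq (p - 2)), ← mul_pow]
    exact pow_lt_pow_left₀ hγζ hγ.le two_ne_zero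
  refine exists_Ups_bounds_of_isAdmissible (hadm p hp) hp hβ hγ hγβ hrM ?_
  rcases hp.lt_or_eq with h | rfl
  · exact .inl h
  · exact .inr hrM
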